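/- Let Δ* > 0 be such that Δ* = min over previously examined patterns j of Δ_j², and suppose the pruning inequality b_{ℓ,w} + Δ*·(b_{ℓ,v} + x_{n+1,ℓ}) < |ρk| − Δ*·(|ηk| + x_{n+1,k}) holds at pattern ℓ. Then for every descendant ℓ' ⊃ ℓ in the pattern tree, the inclusion step size satisfies Δ_{ℓ'}² > Δ*. (Proof by contradiction: assuming Δ_{ℓ'}² < Δ* together with the pruning inequality and the monotonicity bounds b_{ℓ',w} ≤ b_{ℓ,w}, b_{ℓ',v} ≤ b_{ℓ,v}, x_{n+1,ℓ'} ≤ x_{n+1,ℓ} yields that ℓ' is infeasible as an inclusion event.) -/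

import Mathlib

/-!
Both sides of the inclusion equation are controlled linearly in the step size `Δ'`. Since
`0 ≤ x' ≤ x`, the feature sums of the descendant pattern are bounded by the positive/negative
part bounds of the parent, so the pattern side is at most `bnd x w + Δ' (bnd x v + c)`, while
the active-feature side is at least `|ρk| - Δ' (|ηk| + xk)`. For `Δ' ≤ Δ*` the pruning
inequality separates these two bounds, so the equation cannot hold.
-/

open Finset

noncomputable def bnd (n : ℕ) (x w : Fin n → ℝ) : ℝ :=
  max (∑ i ∈ Finset.univ.filter (fun i => 0 < w i), |w i| * x i)
      (∑ i ∈ Finset.univ.filter (fun i => w i < 0), |w i| * x i)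

section PartBounds

variable {n : ℕ} {x x' : Fin n → ℝ}

lemma sum_mul_le_sum_filter_pos (w : Fin n → ℝ) (h0 : ∀ i, 0 ≤ x' i) (hle : ∀ i, x' i ≤ x i) :
    ∑ i, x' i * w i ≤ ∑ i ∈ univ.filter (fun i => 0 < w i), |w i| * x i := by
  rw [sum_filter]
  refine sum_le_sum fun i _ => ?_
  split_ifs with hw
  · rw [abs_of_pos hw, mul_comm (w i)]
    exact mul_le_mul_of_nonneg_right (hle i) hw.le
  · exact mul_nonpos_of_nonneg_of_nonpos (h0 i) (not_lt.mp hw)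

lemma bnd_neg (w : Fin n → ℝ) : bnd n x (-w) = bnd n x w := by
  simp only [bnd, Pi.neg_apply, neg_pos, neg_lt_zero, abs_neg, max_comm]

lemma abs_sum_mul_le_bnd (w : Fin n → ℝ) (h0 : ∀ i, 0 ≤ x' i) (hle : ∀ i, x' i ≤ x i) :
    |∑ i, x' i * w i| ≤ bnd n x w := by
  refine abs_le.mpr ⟨?_, (sum_mul_le_sum_filter_pos w h0 hle).trans (le_max_left _ _)⟩
  have h : ∑ i, x' i * (-w) i ≤ bnd n x (-w) :=
    (sum_mul_le_sum_filter_pos (-w) h0 hle).trans (le_max_left _ _)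
  rw [bnd_neg] at h
  simp only [Pi.neg_apply, mul_neg, sum_neg_distrib] at h
  exact neg_le.mp h

end PartBounds

section StepBounds

variable {a b c t : ℝ}

lemma abs_mul_sub_le (ht : 0 ≤ t) (hc : 0 ≤ c) : |t * (b - c)| ≤ t * (|b| + c) := by
  rw [abs_mul, abs_of_nonneg ht]
  gcongr
  simpa only [abs_of_nonneg hc] using abs_sub b c

lemma abs_sub_mul_sub_le (ht : 0 ≤ t) (hc : 0 ≤ c) : |a - t * (b - c)| ≤ |a| + t * (|b| + c) :=
  (abs_sub _ _).trans (add_le_add le_rfl (abs_mul_sub_le ht hc))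

lemma sub_mul_le_abs_sub_mul_sub (ht : 0 ≤ t) (hc : 0 ≤ c) :
    |a| - t * (|b| + c) ≤ |a - t * (b - c)| :=
  (sub_le_sub_left (abs_mul_sub_le ht hc) _).trans (abs_sub_abs_le_abs_sub _ _)

end StepBounds

theorem pruning_step_size_general (n : ℕ) (w v x x' : Fin n → ℝ)
    (hx' : ∀ i, x' i = 0 ∨ x' i = 1)
    (hmono : ∀ i, x' i ≤ x i)
    (c c' : ℝ) (hc : 0 ≤ c') (hcc : c' ≤ c)
    (Δstar ρk ηk xk : ℝ) (hxk : 0 ≤ xk)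
    (hprune : bnd n x w + Δstar * (bnd n x v + c) < |ρk| - Δstar * (|ηk| + xk))
    (Δ' : ℝ) (hΔ' : 0 < Δ')
    (hincl : |(∑ i, x' i * w i) - Δ' * ((∑ i, x' i * v i) - c')| =
             |ρk - Δ' * (ηk - xk)|) :
    Δ' > Δstar := by
  by_contra! hle
  have hx'0 : ∀ i, 0 ≤ x' i := fun i => by rcases hx' i with h | h <;> simp [h]
  have hw := abs_sum_mul_le_bnd w hx'0 hmono
  have hv := abs_sum_mul_le_bnd v hx'0 hmono
  refine hprune.not_ge ?_
  calc |ρk| - Δstar * (|ηk| + xk) ≤ |ρk| - Δ' * (|ηk| + xk) := by gcongr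
    _ ≤ |ρk - Δ' * (ηk - xk)| := sub_mul_le_abs_sub_mul_sub hΔ'.le hxk
    _ = |(∑ i, x' i * w i) - Δ' * ((∑ i, x' i * v i) - c')| := hincl.symm
    _ ≤ |∑ i, x' i * w i| + Δ' * (|∑ i, x' i * v i| + c') := abs_sub_mul_sub_le hΔ'.le hc
    _ ≤ bnd n x w + Δstar * (bnd n x v + c) := by gcongr; exact hΔ'.le.trans hle

/-- Lemma 1 (tree pruning of the τ-path): under the pruning inequality at pattern `x`,
any positive step size `Δ'` at which a descendant pattern `x'` satisfies the inclusion
equation must exceed the current minimum step size `Δ*`. -/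
theorem pruning_step_size (n : ℕ) (w v x x' : Fin n → ℝ)
    (hx : ∀ i, x i = 0 ∨ x i = 1) (hx' : ∀ i, x' i = 0 ∨ x' i = 1)
    (hmono : ∀ i, x' i ≤ x i)
    (c c' : ℝ) (hc : 0 ≤ c') (hcc : c' ≤ c)
    (Δstar ρk ηk xk : ℝ) (hΔ : 0 < Δstar) (hxk : 0 ≤ xk)
    (hprune : bnd n x w + Δstar * (bnd n x v + c) < |ρk| - Δstar * (|ηk| + xk))
    (Δ' : ℝ) (hΔ' : 0 < Δ')
    (hincl : |(∑ i, x' i * w i) - Δ' * ((∑ i, x' i * v i) - c')| =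
             |ρk - Δ' * (ηk - xk)|) :
    Δ' > Δstar :=
  pruning_step_size_general n w v x x' hx' hmono c c' hc hcc Δstar ρk ηk xk hxk hprune Δ' hΔ' hincl
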